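/- arXiv:0807.1810 — 4 statements merged into one kernel-verified Lean document; each statement's English description precedes it below -/
import Mathlib

section
/- Let V ⊂ H be Hilbert spaces with dual pairing ⟨·,·⟩, ℋ an intermediate Banach space, and B : V × V → V' a bilinear continuous map satisfying the antisymmetry ⟨B(u₁,u₂),u₃⟩ = −⟨B(u₁,u₃),u₂⟩. Then the following two conditions are equivalent: (a) for every η > 0 there exists C_η > 0 such that |⟨B(u₁,u₂),u₃⟩| ≤ η‖u₃‖² + C_η ‖u₁‖²_ℋ ‖u₂‖²_ℋ for all u₁,u₂,u₃ ∈ V; (b) there exists C > 0 such that |⟨B(u₁,u₂),u₃⟩| ≤ C ‖u₁‖_ℋ ‖u₂‖ ‖u₃‖_ℋ for all u₁,u₂,u₃ ∈ V. -/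
/-! Antisymmetry moves the `V`-norm of the estimate (b) to the third slot, where (a) carries it.
(b) ⇒ (a) is then Young's inequality. For (a) ⇒ (b), apply (a) with `η = 1` to `r • u₃`:
by linearity `|B u₁ u₂ u₃| ≤ r ‖u₃‖² + C ‖u₁‖²_ℋ ‖u₂‖²_ℋ / r` for every `r > 0`, and
minimizing over `r` gives a bound of order `‖u₁‖_ℋ ‖u₂‖_ℋ ‖u₃‖`. -/

open Filter Topology

theorem mul_le_mul_sq_add_sq_div {p y η : ℝ} (hη : 0 < η) :
    p * y ≤ η * y ^ 2 + p ^ 2 / (4 * η) := by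
  have h : (p * y - η * y ^ 2) * (4 * η) ≤ p ^ 2 := by
    nlinarith [sq_nonneg (p - 2 * η * y)]
  linarith [(le_div_iff₀ (by positivity : 0 < 4 * η)).mpr h]

theorem nonpos_of_forall_pos_le_mul {X c : ℝ} (h : ∀ r > 0, X ≤ r * c) : X ≤ 0 := by
  have hlim : Tendsto (fun r : ℝ => r * c) (𝓝[>] 0) (𝓝 0) := by
    simpa using ((continuous_mul_const c).tendsto 0).mono_left nhdsWithin_le_nhds
  exact ge_of_tendsto hlim (eventually_nhdsWithin_of_forall fun r hr => h r hr)

/-- Optimizing `r * b ^ 2 + C * a ^ 2 / r` over `r > 0` at `r = a / b` (or letting `r → 0` or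
`r → ∞` when `a` or `b` vanishes). -/
theorem le_one_add_mul_mul_of_forall_pos_le {X a b C : ℝ} (ha : 0 ≤ a) (hb : 0 ≤ b)
    (h : ∀ r > 0, X ≤ r * b ^ 2 + C * a ^ 2 / r) : X ≤ (1 + C) * a * b := by
  rcases ha.eq_or_lt with rfl | ha
  · simpa using nonpos_of_forall_pos_le_mul fun r hr => by simpa using h r hr
  rcases hb.eq_or_lt with rfl | hb
  · simpa using nonpos_of_forall_pos_le_mul fun r hr => by
      simpa [div_eq_mul_inv, mul_comm] using h r⁻¹ (inv_pos.mpr hr)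
  calc X ≤ a / b * b ^ 2 + C * a ^ 2 / (a / b) := h _ (div_pos ha hb)
    _ = (1 + C) * a * b := by field_simp

theorem LinearMap.abs_le_mul_norm_of_abs_le_sq_add {V : Type*} [NormedAddCommGroup V]
    [NormedSpace ℝ V] {f : V →ₗ[ℝ] ℝ} {C K : ℝ} (hK : 0 ≤ K)
    (h : ∀ v, |f v| ≤ ‖v‖ ^ 2 + C * K ^ 2) (v : V) : |f v| ≤ (1 + C) * K * ‖v‖ := by
  refine le_one_add_mul_mul_of_forall_pos_le hK (norm_nonneg v) fun r hr => ?_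
  have hr' : r * |f v| ≤ r ^ 2 * ‖v‖ ^ 2 + C * K ^ 2 := by
    simpa [norm_smul, abs_mul, abs_of_pos hr, mul_pow] using h (r • v)
  have hexpand : r * (r * ‖v‖ ^ 2 + C * K ^ 2 / r) = r ^ 2 * ‖v‖ ^ 2 + C * K ^ 2 := by
    field_simp
  exact le_of_mul_le_mul_left (hr'.trans_eq hexpand.symm) hr

/- `nHH` is the norm of the intermediate space `ℋ`, and the trilinear form `B u₁ u₂ u₃` is the
pairing `⟨B(u₁,u₂),u₃⟩`. -/
theorem stmt_0_general {V : Type*} [NormedAddCommGroup V] [NormedSpace ℝ V]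
    (nHH : V → ℝ)
    (hHH0 : ∀ v, 0 ≤ nHH v)
    (B : V →ₗ[ℝ] V →ₗ[ℝ] V →ₗ[ℝ] ℝ)
    (hanti : ∀ u₁ u₂ u₃ : V, B u₁ u₂ u₃ = - B u₁ u₃ u₂) :
    (∀ η > (0:ℝ), ∃ Cη > (0:ℝ), ∀ u₁ u₂ u₃ : V,
        |B u₁ u₂ u₃| ≤ η * ‖u₃‖ ^ 2 + Cη * nHH u₁ ^ 2 * nHH u₂ ^ 2)
    ↔ (∃ C > (0:ℝ), ∀ u₁ u₂ u₃ : V,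
        |B u₁ u₂ u₃| ≤ C * nHH u₁ * ‖u₂‖ * nHH u₃) := by
  have hswap : ∀ u₁ u₂ u₃, |B u₁ u₂ u₃| = |B u₁ u₃ u₂| := fun _ _ _ => by rw [hanti, abs_neg]
  constructor
  · intro h
    obtain ⟨C, hC, hCb⟩ := h 1 one_pos
    refine ⟨1 + C, by positivity, fun u₁ u₂ u₃ => ?_⟩
    calc |B u₁ u₂ u₃| = |B u₁ u₃ u₂| := hswap u₁ u₂ u₃
      _ ≤ (1 + C) * (nHH u₁ * nHH u₃) * ‖u₂‖ :=
        (B u₁ u₃).abs_le_mul_norm_of_abs_le_sq_add (mul_nonneg (hHH0 u₁) (hHH0 u₃))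
          (fun v => by simpa [mul_pow, mul_assoc] using hCb u₁ u₃ v) u₂
      _ = (1 + C) * nHH u₁ * ‖u₂‖ * nHH u₃ := by ring
  · rintro ⟨C, hC, hCb⟩ η hη
    refine ⟨C ^ 2 / (4 * η), by positivity, fun u₁ u₂ u₃ => ?_⟩
    calc |B u₁ u₂ u₃| = |B u₁ u₃ u₂| := hswap u₁ u₂ u₃
      _ ≤ C * nHH u₁ * nHH u₂ * ‖u₃‖ := by linarith [hCb u₁ u₃ u₂]
      _ ≤ η * ‖u₃‖ ^ 2 + (C * nHH u₁ * nHH u₂) ^ 2 / (4 * η) := mul_le_mul_sq_add_sq_div hη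
      _ = η * ‖u₃‖ ^ 2 + C ^ 2 / (4 * η) * nHH u₁ ^ 2 * nHH u₂ ^ 2 := by ring

theorem stmt_0 {V : Type*} [NormedAddCommGroup V] [NormedSpace ℝ V]
    (nHH : V → ℝ)
    (hHH0 : ∀ v, 0 ≤ nHH v)
    (hHHsmul : ∀ (c : ℝ) (v : V), nHH (c • v) = |c| * nHH v)
    (B : V →ₗ[ℝ] V →ₗ[ℝ] V →ₗ[ℝ] ℝ)
    (hBcont : Continuous fun p : V × V × V => B p.1 p.2.1 p.2.2)
    (hanti : ∀ u₁ u₂ u₃ : V, B u₁ u₂ u₃ = - B u₁ u₃ u₂) :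
    (∀ η > (0:ℝ), ∃ Cη > (0:ℝ), ∀ u₁ u₂ u₃ : V,
        |B u₁ u₂ u₃| ≤ η * ‖u₃‖ ^ 2 + Cη * nHH u₁ ^ 2 * nHH u₂ ^ 2)
    ↔ (∃ C > (0:ℝ), ∀ u₁ u₂ u₃ : V,
        |B u₁ u₂ u₃| ≤ C * nHH u₁ * ‖u₂‖ * nHH u₃) :=
  stmt_0_general nHH hHH0 B hanti
end

section
/- Under the assumptions of condition (C1) (bilinearity, antisymmetry of B, the interpolation inequality ‖v‖²_ℋ ≤ a₀|v|‖v‖, and the bound |⟨B(u₁,u₂),u₃⟩| ≤ C‖u₁‖_ℋ‖u₂‖‖u₃‖_ℋ), for every η > 0 there exists C_η > 0 such that for all u₁,u₂ ∈ V, |⟨B(u₁,u₁) − B(u₂,u₂), u₁ − u₂⟩| ≤ η‖u₁−u₂‖² + C_η |u₁−u₂|² ‖u₂‖⁴_ℋ. -/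
/-! The difference `B(u₁) - B(u₂)` tested against `w = u₁ - u₂` collapses, by antisymmetry, to the
single term `B(w, w, u₂)`, bounded by `C ‖w‖_ℋ ‖w‖ ‖u₂‖_ℋ`. Two applications of the weighted
AM–GM inequality `ab ≤ (ε/2) a² + b²/(2ε)`, with the interpolation inequality
`‖w‖²_ℋ ≤ a₀ |w| ‖w‖` in between, absorb `‖w‖` into `η ‖w‖²` and leave `|w|² ‖u₂‖⁴_ℋ`. -/

theorem mul_le_half_mul_sq_add_sq_div {ε : ℝ} (hε : 0 < ε) (a b : ℝ) :
    a * b ≤ ε / 2 * a ^ 2 + b ^ 2 / (2 * ε) := by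
  have h : ε / 2 * a ^ 2 + b ^ 2 / (2 * ε) - a * b = (ε * a - b) ^ 2 / (2 * ε) := by
    field_simp
    ring
  linarith [div_nonneg (sq_nonneg (ε * a - b)) (by positivity : (0 : ℝ) ≤ 2 * ε)]

theorem le_mul_sq_add_of_le_of_sq_le {E C m s r a₀ t η : ℝ} (hη : 0 < η)
    (hE : E ≤ C * m * s * r) (hm : m ^ 2 ≤ a₀ * t * s) :
    E ≤ η * s ^ 2 + C ^ 4 * a₀ ^ 2 / (8 * η ^ 3) * t ^ 2 * r ^ 4 := by
  have hm' : (C * m * r) ^ 2 ≤ s * (C ^ 2 * a₀ * t * r ^ 2) := by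
    nlinarith [mul_le_mul_of_nonneg_left hm (sq_nonneg (C * r))]
  calc E ≤ s * (C * m * r) := hE.trans_eq (by ring)
    _ ≤ η / 2 * s ^ 2 + (C * m * r) ^ 2 / (2 * η) := mul_le_half_mul_sq_add_sq_div hη _ _
    _ ≤ η / 2 * s ^ 2 + s * (C ^ 2 * a₀ * t * r ^ 2 / (2 * η)) := by
      rw [mul_div_assoc']; gcongr
    _ ≤ η / 2 * s ^ 2 +
        (η / 2 * s ^ 2 + (C ^ 2 * a₀ * t * r ^ 2 / (2 * η)) ^ 2 / (2 * η)) := by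
      gcongr; exact mul_le_half_mul_sq_add_sq_div hη _ _
    _ = η * s ^ 2 + C ^ 4 * a₀ ^ 2 / (8 * η ^ 3) * t ^ 2 * r ^ 4 := by
      field_simp; ring

theorem LinearMap.diag_apply_sub_diag_apply_of_alternating {R M : Type*} [CommRing R]
    [AddCommGroup M] [Module R M] (B : M →ₗ[R] M →ₗ[R] M →ₗ[R] R) (hB : ∀ x y, B x y y = 0)
    (u₁ u₂ : M) :
    B u₁ u₁ (u₁ - u₂) - B u₂ u₂ (u₁ - u₂) = B (u₁ - u₂) u₂ (u₁ - u₂) := by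
  obtain ⟨w, rfl⟩ : ∃ w, u₁ = w + u₂ := ⟨u₁ - u₂, (sub_add_cancel u₁ u₂).symm⟩
  simp only [add_sub_cancel_right, map_add, LinearMap.add_apply, hB]
  ring

theorem stmt_2_general {V : Type*} [NormedAddCommGroup V] [NormedSpace ℝ V]
    (nH nHH : V → ℝ) (a₀ C : ℝ) (ha₀ : 0 < a₀) (hC : 0 < C)
    (hinterp : ∀ v : V, nHH v ^ 2 ≤ a₀ * nH v * ‖v‖)
    (B : V →ₗ[ℝ] V →ₗ[ℝ] V →ₗ[ℝ] ℝ)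
    (hanti : ∀ u₁ u₂ u₃ : V, B u₁ u₂ u₃ = - B u₁ u₃ u₂)
    (hbound : ∀ u₁ u₂ u₃ : V, |B u₁ u₂ u₃| ≤ C * nHH u₁ * ‖u₂‖ * nHH u₃) :
    ∀ η > (0:ℝ), ∃ Cη > (0:ℝ), ∀ u₁ u₂ : V,
      |B u₁ u₁ (u₁ - u₂) - B u₂ u₂ (u₁ - u₂)|
        ≤ η * ‖u₁ - u₂‖ ^ 2 + Cη * nH (u₁ - u₂) ^ 2 * nHH u₂ ^ 4 := by
  intro η hη
  refine ⟨C ^ 4 * a₀ ^ 2 / (8 * η ^ 3), by positivity, fun u₁ u₂ => ?_⟩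
  have halt : ∀ x y, B x y y = 0 := fun x y => by linarith [hanti x y y]
  rw [B.diag_apply_sub_diag_apply_of_alternating halt, hanti, abs_neg]
  exact le_mul_sq_add_of_le_of_sq_le hη (hbound _ _ _) (hinterp _)

theorem stmt_2 {V : Type*} [NormedAddCommGroup V] [NormedSpace ℝ V]
    (nH nHH : V → ℝ) (a₀ C : ℝ) (ha₀ : 0 < a₀) (hC : 0 < C)
    (hH0 : ∀ v, 0 ≤ nH v) (hHH0 : ∀ v, 0 ≤ nHH v)
    (hinterp : ∀ v : V, nHH v ^ 2 ≤ a₀ * nH v * ‖v‖)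
    (B : V →ₗ[ℝ] V →ₗ[ℝ] V →ₗ[ℝ] ℝ)
    (hanti : ∀ u₁ u₂ u₃ : V, B u₁ u₂ u₃ = - B u₁ u₃ u₂)
    (hbound : ∀ u₁ u₂ u₃ : V, |B u₁ u₂ u₃| ≤ C * nHH u₁ * ‖u₂‖ * nHH u₃) :
    ∀ η > (0:ℝ), ∃ Cη > (0:ℝ), ∀ u₁ u₂ : V,
      |B u₁ u₁ (u₁ - u₂) - B u₂ u₂ (u₁ - u₂)|
        ≤ η * ‖u₁ - u₂‖ ^ 2 + Cη * nH (u₁ - u₂) ^ 2 * nHH u₂ ^ 4 :=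
  stmt_2_general nH nHH a₀ C ha₀ hC hinterp B hanti hbound
end

section
/- For the GOY shell model bilinear map B on H = {complex sequences u with Σ|uₙ|² < ∞}, defined by [B(u,v)]ₙ = −i(a k_{n+1} u*_{n+1} v*_{n+2} + b kₙ u*_{n−1} v*_{n+1} − a k_{n−1} u*_{n−1} v*_{n−2} − b k_{n−1} u*_{n−2} v*_{n−1}) with kₙ = k₀μⁿ, the trilinear form ⟨B(u,v),w⟩ = Re Σₙ [B(u,v)]ₙ w*ₙ satisfies the bound |⟨B(u,v),w⟩| ≤ C |u| |A^{1/2}v| |w| for all u,w ∈ H and v ∈ Dom(A^{1/2}), where (Au)ₙ = ν kₙ² uₙ. -/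
/- GOY shell model. Sequences are indexed so that shell `n ≥ 1` sits at index
`n`, with the convention `u 0 = 0` (standing for `u₀ = u₋₁ = 0`; negative
indices become `0` by truncated subtraction, where the coefficient multiplies
a vanishing factor). `k n = k₀ μⁿ`. -/
noncomputable def goyB (k₀ μ a b : ℝ) (u v : ℕ → ℂ) (n : ℕ) : ℂ :=
  -Complex.I *
    ((↑(a * (k₀ * μ ^ (n+1))) : ℂ) * (starRingEnd ℂ) (u (n+1)) * (starRingEnd ℂ) (v (n+2))
      + (↑(b * (k₀ * μ ^ n)) : ℂ) * (starRingEnd ℂ) (u (n-1)) * (starRingEnd ℂ) (v (n+1))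
      - (↑(a * (k₀ * μ ^ (n-1))) : ℂ) * (starRingEnd ℂ) (u (n-1)) * (starRingEnd ℂ) (v (n-2))
      - (↑(b * (k₀ * μ ^ (n-1))) : ℂ) * (starRingEnd ℂ) (u (n-2)) * (starRingEnd ℂ) (v (n-1)))

/- `⟨B(u,v),w⟩ = Re Σ_{n≥1} [B(u,v)]ₙ w*ₙ`. -/
noncomputable def goyForm (k₀ μ a b : ℝ) (u v w : ℕ → ℂ) : ℝ :=
  (∑' n : ℕ, goyB k₀ μ a b u v (n+1) * (starRingEnd ℂ) (w (n+1))).re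

/-! Bound every `‖u j‖` by `|u|`. In each of the four terms of `[B(u,v)]ₙ` the wavenumber
is at most `μ` times the wavenumber `k_m` of the `v`-factor `v_m` present, since `k_{m+1} = μ k_m`.
Hence `|⟨B(u,v),w⟩| ≤ (|a| + |b|) μ |u| ∑_s ∑ₙ k_{s n} |v_{s n}| |w_{n+1}|` over the four index
maps `s = n + 3, n + 2, n - 1, n`. None of them increases the `ℓ²` norm of `(k_m |v_m|)` (for `n - 1`
because `v 0 = 0`), so Cauchy–Schwarz bounds every inner sum by `|A^{1/2} v| |w| / √ν`. -/

open ComplexConjugate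

theorem summable_mul_and_tsum_mul_le_sqrt_mul_sqrt {ι : Type*} {f g : ι → ℝ}
    (hf0 : ∀ i, 0 ≤ f i) (hg0 : ∀ i, 0 ≤ g i) (hf : Summable (fun i => f i ^ 2))
    (hg : Summable (fun i => g i ^ 2)) {A B : ℝ} (hA : ∑' i, f i ^ 2 ≤ A)
    (hB : ∑' i, g i ^ 2 ≤ B) :
    Summable (fun i => f i * g i) ∧ ∑' i, f i * g i ≤ √A * √B := by
  obtain ⟨hsum, hle⟩ : Summable (fun i => f i * g i) ∧
      ∑' i, f i * g i ≤ √(∑' i, f i ^ 2) * √(∑' i, g i ^ 2) := by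
    simpa [Real.sqrt_eq_rpow] using
      Real.summable_and_inner_le_Lp_mul_Lq_tsum_of_nonneg Real.HolderConjugate.two_two hf0 hg0
        (by simpa using hf) (by simpa using hg)
  exact ⟨hsum, hle.trans (mul_le_mul (Real.sqrt_le_sqrt hA) (Real.sqrt_le_sqrt hB)
    (Real.sqrt_nonneg _) (Real.sqrt_nonneg _))⟩

theorem norm_le_sqrt_tsum_norm_sq {ι E : Type*} [SeminormedAddCommGroup E] {f : ι → E}
    (hf : Summable (fun i => ‖f i‖ ^ 2)) (j : ι) : ‖f j‖ ≤ √(∑' i, ‖f i‖ ^ 2) :=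
  Real.le_sqrt_of_sq_le (hf.le_tsum j fun _ _ => sq_nonneg _)

theorem summable_comp_sub_one_and_tsum_eq {G : Type*} [AddCommGroup G] [TopologicalSpace G]
    [IsTopologicalAddGroup G] [T2Space G] {f : ℕ → G} (hf : Summable f) (hf0 : f 0 = 0) :
    Summable (fun n => f (n - 1)) ∧ ∑' n, f (n - 1) = ∑' n, f n := by
  have hs : Summable (fun n => f (n - 1)) := (summable_nat_add_iff 1).1 (by simpa using hf)
  exact ⟨hs, by simp [hs.tsum_eq_zero_add, hf0]⟩

/-- The sequence `kₙ |vₙ|`, whose `ℓ²` norm is `|A^{1/2} v| / √ν`. -/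
noncomputable def weightedAbs (k₀ μ : ℝ) (v : ℕ → ℂ) (n : ℕ) : ℝ := |k₀ * μ ^ n| * ‖v n‖

theorem norm_ofReal_mul_conj_mul_conj_le {x A k₀ μ M : ℝ} {j l : ℕ} {z w : ℂ} (hx : |x| ≤ A)
    (hμ : 1 ≤ μ) (hjl : j ≤ l + 1) (hz : ‖z‖ ≤ M) :
    ‖(↑(x * (k₀ * μ ^ j)) : ℂ) * conj z * conj w‖ ≤ A * μ * M * (|k₀ * μ ^ l| * ‖w‖) := by
  have hk : |k₀ * μ ^ j| ≤ μ * |k₀ * μ ^ l| := by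
    have : μ ^ j ≤ μ ^ (l + 1) := pow_le_pow_right₀ hμ hjl
    rw [abs_mul, abs_mul, abs_of_nonneg (by positivity : 0 ≤ μ ^ j),
      abs_of_nonneg (by positivity : 0 ≤ μ ^ l)]
    nlinarith [abs_nonneg k₀, pow_succ μ l]
  have hA : 0 ≤ A := (abs_nonneg x).trans hx
  rw [norm_mul, norm_mul, Complex.norm_real, Real.norm_eq_abs, abs_mul, Complex.norm_conj,
    Complex.norm_conj]
  calc |x| * |k₀ * μ ^ j| * ‖z‖ * ‖w‖ ≤ A * (μ * |k₀ * μ ^ l|) * M * ‖w‖ := by gcongr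
    _ = A * μ * M * (|k₀ * μ ^ l| * ‖w‖) := by ring

theorem norm_goyB_succ_le {k₀ μ a b M : ℝ} (hμ : 1 ≤ μ) {u : ℕ → ℂ} (hu : ∀ j, ‖u j‖ ≤ M)
    (v : ℕ → ℂ) (n : ℕ) :
    ‖goyB k₀ μ a b u v (n + 1)‖ ≤ (|a| + |b|) * μ * M *
      (weightedAbs k₀ μ v (n + 3) + weightedAbs k₀ μ v (n + 2) + weightedAbs k₀ μ v (n - 1)
        + weightedAbs k₀ μ v n) := by
  have ha : |a| ≤ |a| + |b| := le_add_of_nonneg_right (abs_nonneg b)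
  have hb : |b| ≤ |a| + |b| := le_add_of_nonneg_left (abs_nonneg a)
  have h1 := norm_ofReal_mul_conj_mul_conj_le (k₀ := k₀) (w := v (n + 3)) ha hμ
    (show n + 2 ≤ n + 3 + 1 by omega) (hu (n + 2))
  have h2 := norm_ofReal_mul_conj_mul_conj_le (k₀ := k₀) (w := v (n + 2)) hb hμ
    (show n + 1 ≤ n + 2 + 1 by omega) (hu n)
  have h3 := norm_ofReal_mul_conj_mul_conj_le (k₀ := k₀) (w := v (n - 1)) ha hμ
    (show n ≤ n - 1 + 1 by omega) (hu n)
  have h4 := norm_ofReal_mul_conj_mul_conj_le (k₀ := k₀) (w := v n) hb hμ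
    (show n ≤ n + 1 by omega) (hu (n - 1))
  rw [goyB, show n + 1 - 1 = n by omega, show n + 1 - 2 = n - 1 by omega, norm_mul, norm_neg,
    Complex.norm_I, one_mul]
  have htri : ∀ T₁ T₂ T₃ T₄ : ℂ, ‖T₁ + T₂ - T₃ - T₄‖ ≤ ‖T₁‖ + ‖T₂‖ + ‖T₃‖ + ‖T₄‖ :=
    fun T₁ T₂ T₃ T₄ => by
      linarith [norm_sub_le (T₁ + T₂ - T₃) T₄, norm_sub_le (T₁ + T₂) T₃, norm_add_le T₁ T₂]
  refine (htri _ _ _ _).trans ?_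
  simp only [weightedAbs]
  linarith

theorem abs_goyForm_le {k₀ μ a b M : ℝ} (hμ : 1 ≤ μ) {u v w : ℕ → ℂ} (hu : ∀ j, ‖u j‖ ≤ M)
    (hv0 : v 0 = 0) (hv : Summable (fun n => weightedAbs k₀ μ v n ^ 2))
    (hw : Summable (fun n => ‖w n‖ ^ 2)) :
    |goyForm k₀ μ a b u v w| ≤ 4 * ((|a| + |b|) * μ * M)
      * √(∑' n, weightedAbs k₀ μ v n ^ 2) * √(∑' n, ‖w n‖ ^ 2) := by
  set Q := weightedAbs k₀ μ v
  set K := (|a| + |b|) * μ * M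
  set V := √(∑' n, Q n ^ 2)
  set W := √(∑' n, ‖w n‖ ^ 2)
  have hQ0 : ∀ n, 0 ≤ Q n := fun n => mul_nonneg (abs_nonneg _) (norm_nonneg _)
  have hK : 0 ≤ K := mul_nonneg (by positivity) ((norm_nonneg _).trans (hu 0))
  have hw1 : Summable (fun n => ‖w (n + 1)‖ ^ 2) := (summable_nat_add_iff 1).2 hw
  have hw1le : ∑' n, ‖w (n + 1)‖ ^ 2 ≤ ∑' n, ‖w n‖ ^ 2 :=
    tsum_comp_le_tsum_of_inj hw (fun _ => sq_nonneg _) (add_left_injective 1)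
  have shifted : ∀ s : ℕ → ℕ, Summable (fun n => Q (s n) ^ 2) →
      ∑' n, Q (s n) ^ 2 ≤ ∑' n, Q n ^ 2 →
      Summable (fun n => Q (s n) * ‖w (n + 1)‖) ∧ ∑' n, Q (s n) * ‖w (n + 1)‖ ≤ V * W :=
    fun s hs hsV => summable_mul_and_tsum_mul_le_sqrt_mul_sqrt (fun n => hQ0 (s n))
      (fun n => norm_nonneg (w (n + 1))) hs hw1 hsV hw1le
  have hadd : ∀ k, Summable (fun n => Q (n + k) ^ 2) ∧ ∑' n, Q (n + k) ^ 2 ≤ ∑' n, Q n ^ 2 :=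
    fun k => ⟨(summable_nat_add_iff k).2 hv,
      tsum_comp_le_tsum_of_inj hv (fun _ => sq_nonneg _) (add_left_injective k)⟩
  have hpred := summable_comp_sub_one_and_tsum_eq hv (by simp [Q, weightedAbs, hv0])
  obtain ⟨hs₁, hle₁⟩ := shifted (· + 3) (hadd 3).1 (hadd 3).2
  obtain ⟨hs₂, hle₂⟩ := shifted (· + 2) (hadd 2).1 (hadd 2).2
  obtain ⟨hs₃, hle₃⟩ := shifted (· - 1) hpred.1 hpred.2.le
  obtain ⟨hs₄, hle₄⟩ := shifted (fun n => n) hv le_rfl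
  set z := fun n => goyB k₀ μ a b u v (n + 1) * conj (w (n + 1))
  have hz : ∀ n, ‖z n‖ ≤ K * (Q (n + 3) * ‖w (n + 1)‖ + Q (n + 2) * ‖w (n + 1)‖
      + Q (n - 1) * ‖w (n + 1)‖ + Q n * ‖w (n + 1)‖) := fun n => by
    rw [norm_mul, Complex.norm_conj]
    nlinarith [norm_goyB_succ_le (a := a) (b := b) (k₀ := k₀) hμ hu v n, norm_nonneg (w (n + 1))]
  have hzs : Summable (fun n => ‖z n‖) :=
    ((((hs₁.add hs₂).add hs₃).add hs₄).mul_left K).of_nonneg_of_le (fun _ => norm_nonneg _) hz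
  calc |goyForm k₀ μ a b u v w| ≤ ‖∑' n, z n‖ := Complex.abs_re_le_norm _
    _ ≤ ∑' n, ‖z n‖ := norm_tsum_le_tsum_norm hzs
    _ ≤ K * (∑' n, Q (n + 3) * ‖w (n + 1)‖ + ∑' n, Q (n + 2) * ‖w (n + 1)‖
        + ∑' n, Q (n - 1) * ‖w (n + 1)‖ + ∑' n, Q n * ‖w (n + 1)‖) :=
      hasSum_le hz hzs.hasSum ((((hs₁.hasSum.add hs₂.hasSum).add hs₃.hasSum).add
        hs₄.hasSum).mul_left K)
    _ ≤ K * (V * W + V * W + V * W + V * W) := by gcongr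
    _ = 4 * K * V * W := by ring

theorem stmt_9_general (k₀ μ ν a b : ℝ) (hμ : 1 < μ) (hν : 0 < ν) :
    ∃ C > (0:ℝ), ∀ u v w : ℕ → ℂ,
      u 0 = 0 → v 0 = 0 → w 0 = 0 →
      Summable (fun n => ‖u n‖ ^ 2) →
      Summable (fun n => (k₀ * μ ^ n) ^ 2 * ‖v n‖ ^ 2) →
      Summable (fun n => ‖w n‖ ^ 2) →
      |goyForm k₀ μ a b u v w|
        ≤ C * Real.sqrt (∑' n, ‖u n‖ ^ 2)
            * Real.sqrt (∑' n, ν * (k₀ * μ ^ n) ^ 2 * ‖v n‖ ^ 2)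
            * Real.sqrt (∑' n, ‖w n‖ ^ 2) := by
  refine ⟨4 * ((|a| + |b| + 1) * μ) / √ν, by positivity, fun u v w _ hv0 _ hu hv hw => ?_⟩
  have hsq : ∀ n, weightedAbs k₀ μ v n ^ 2 = (k₀ * μ ^ n) ^ 2 * ‖v n‖ ^ 2 := fun n => by
    rw [weightedAbs, mul_pow, sq_abs]
  have hA : √(∑' n, ν * (k₀ * μ ^ n) ^ 2 * ‖v n‖ ^ 2)
      = √ν * √(∑' n, weightedAbs k₀ μ v n ^ 2) := by
    rw [← Real.sqrt_mul hν.le, ← tsum_mul_left]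
    simp only [hsq, mul_assoc]
  have hv' : Summable (fun n => weightedAbs k₀ μ v n ^ 2) := by simpa only [hsq] using hv
  have hform := abs_goyForm_le (a := a) (b := b) hμ.le (norm_le_sqrt_tsum_norm_sq (f := u) hu) hv0
    hv' hw
  have hν' : 0 < √ν := Real.sqrt_pos.2 hν
  rw [hA]
  calc |goyForm k₀ μ a b u v w|
      ≤ 4 * ((|a| + |b|) * μ * √(∑' n, ‖u n‖ ^ 2)) * √(∑' n, weightedAbs k₀ μ v n ^ 2)
        * √(∑' n, ‖w n‖ ^ 2) := hform
    _ ≤ 4 * ((|a| + |b| + 1) * μ * √(∑' n, ‖u n‖ ^ 2)) * √(∑' n, weightedAbs k₀ μ v n ^ 2)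
        * √(∑' n, ‖w n‖ ^ 2) := by gcongr 4 * (?_ * _ * _) * _ * _; linarith
    _ = _ := by field_simp

theorem stmt_9 (k₀ μ ν a b : ℝ) (hk₀ : 0 < k₀) (hμ : 1 < μ) (hν : 0 < ν) :
    ∃ C > (0:ℝ), ∀ u v w : ℕ → ℂ,
      u 0 = 0 → v 0 = 0 → w 0 = 0 →
      Summable (fun n => ‖u n‖ ^ 2) →
      Summable (fun n => (k₀ * μ ^ n) ^ 2 * ‖v n‖ ^ 2) →
      Summable (fun n => ‖w n‖ ^ 2) →
      |goyForm k₀ μ a b u v w|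
        ≤ C * Real.sqrt (∑' n, ‖u n‖ ^ 2)
            * Real.sqrt (∑' n, ν * (k₀ * μ ^ n) ^ 2 * ‖v n‖ ^ 2)
            * Real.sqrt (∑' n, ‖w n‖ ^ 2) :=
  stmt_9_general k₀ μ ν a b hμ hν
end

section
/- For the GOY shell model bilinear map B as above, the antisymmetry ⟨B(u,v),w⟩ = −⟨B(u,w),v⟩ holds for all u, v, w in Dom(A^{1/2}); in particular ⟨B(u,v),v⟩ = 0. -/
open Complex ComplexConjugate

lemma summable_of_summable_mul_of_le {ι : Type*} {w f : ι → ℝ} {c : ℝ} (hc : 0 < c)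
    (hw : ∀ i, c ≤ w i) (hf : ∀ i, 0 ≤ f i) (h : Summable fun i => w i * f i) : Summable f :=
  Summable.of_nonneg_of_le hf
    (fun i => by rw [le_div_iff₀' hc]; exact mul_le_mul_of_nonneg_right (hw i) (hf i))
    (h.div_const c)

lemma summable_comp_sub_one {f : ℕ → ℝ} (hf : Summable f) : Summable fun n => f (n - 1) :=
  (summable_nat_add_iff 1).mp (by simpa using hf)

lemma summable_mul_mul_of_summable_sq {ι : Type*} {f g h : ι → ℝ}
    (hf : Summable fun i => f i ^ 2) (hg : Summable fun i => g i ^ 2)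
    (hh : Summable fun i => h i ^ 2) :
    Summable fun i => f i * g i * h i := by
  set S := ∑' i, h i ^ 2
  refine Summable.of_norm_bounded ((hf.add (hg.mul_left S)).div_const 2) fun i => ?_
  have hS : h i ^ 2 ≤ S := hh.le_tsum i fun j _ => sq_nonneg (h j)
  have hgh : (g i * h i) ^ 2 ≤ S * g i ^ 2 := by
    rw [mul_pow, mul_comm S]; exact mul_le_mul_of_nonneg_left hS (sq_nonneg _)
  have amgm := two_mul_le_add_sq |f i| |g i * h i|
  rw [sq_abs, sq_abs] at amgm
  rw [Real.norm_eq_abs, mul_assoc, abs_mul]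
  linarith

lemma tsum_nat_add_of_eq_zero {M : Type*} [AddCommMonoid M] [TopologicalSpace M] {f : ℕ → M}
    (k : ℕ) (hf : ∀ i < k, f i = 0) : ∑' n, f (n + k) = ∑' n, f n := by
  refine (add_left_injective k).tsum_eq fun i hi => ⟨i - k, ?_⟩
  have : k ≤ i := not_lt.mp fun h => hi (hf i h)
  simp [Nat.sub_add_cancel this]

noncomputable def goyTriadA (k₀ μ a : ℝ) (u x y : ℕ → ℂ) (n : ℕ) : ℂ :=
  (↑(a * (k₀ * μ ^ n)) : ℂ) * conj (u n) * conj (x (n - 1)) * conj (y (n + 1))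

noncomputable def goyTriadB (k₀ μ b : ℝ) (u x y : ℕ → ℂ) (n : ℕ) : ℂ :=
  (↑(b * (k₀ * μ ^ n)) : ℂ) * conj (u (n - 1)) * conj (x n) * conj (y (n + 1))

lemma goyB_succ_mul_conj (k₀ μ a b : ℝ) (u x y : ℕ → ℂ) (n : ℕ) :
    goyB k₀ μ a b u x (n + 1) * conj (y (n + 1)) =
      -I * (goyTriadA k₀ μ a u y x (n + 2) - goyTriadA k₀ μ a u x y n
        + (goyTriadB k₀ μ b u y x (n + 1) - goyTriadB k₀ μ b u x y n)) := by
  simp only [goyB, goyTriadA, goyTriadB, Nat.add_sub_cancel, show n + 2 - 1 = n + 1 from rfl,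
    show n + 1 - 2 = n - 1 by omega]
  ring

lemma norm_ofReal_mul_conj_mul_conj_mul_conj (r : ℝ) (p q s : ℂ) :
    ‖(r : ℂ) * conj p * conj q * conj s‖ = |r| * ‖p‖ * ‖q‖ * ‖s‖ := by
  simp only [norm_mul, Complex.norm_conj, Complex.norm_real, Real.norm_eq_abs]

lemma summable_sq_norm_of_weighted {k₀ μ : ℝ} (hk₀ : 0 < k₀) (hμ : 1 ≤ μ) {x : ℕ → ℂ}
    (hx : Summable fun n => (k₀ * μ ^ n) ^ 2 * ‖x n‖ ^ 2) : Summable fun n => ‖x n‖ ^ 2 := by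
  refine summable_of_summable_mul_of_le (pow_pos hk₀ 2) (fun n => ?_) (fun n => by positivity) hx
  have : k₀ ≤ k₀ * μ ^ n := le_mul_of_one_le_right hk₀.le (one_le_pow₀ hμ)
  exact pow_le_pow_left₀ hk₀.le this 2

section WeightedSquareSummable

variable {k₀ μ : ℝ} (hk₀ : 0 < k₀) (hμ : 1 ≤ μ) {u x y : ℕ → ℂ}
  (hu : Summable fun n => (k₀ * μ ^ n) ^ 2 * ‖u n‖ ^ 2)
  (hx : Summable fun n => (k₀ * μ ^ n) ^ 2 * ‖x n‖ ^ 2)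
  (hy : Summable fun n => (k₀ * μ ^ n) ^ 2 * ‖y n‖ ^ 2)
include hk₀ hμ hu hx hy

lemma summable_goyTriadA (a : ℝ) : Summable (goyTriadA k₀ μ a u x y) := by
  have hU : Summable fun n => (k₀ * μ ^ n * ‖u n‖) ^ 2 := by simpa only [mul_pow] using hu
  have hX := summable_comp_sub_one (summable_sq_norm_of_weighted hk₀ hμ hx)
  have hY := (summable_nat_add_iff 1).mpr (summable_sq_norm_of_weighted hk₀ hμ hy)
  refine Summable.of_norm (((summable_mul_mul_of_summable_sq hU hX hY).mul_left |a|).congr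
    fun n => ?_)
  rw [goyTriadA, norm_ofReal_mul_conj_mul_conj_mul_conj, abs_mul,
    abs_of_pos (by positivity : 0 < k₀ * μ ^ n)]
  ring

lemma summable_goyTriadB (b : ℝ) : Summable (goyTriadB k₀ μ b u x y) := by
  have hX : Summable fun n => (k₀ * μ ^ n * ‖x n‖) ^ 2 := by simpa only [mul_pow] using hx
  have hU := summable_comp_sub_one (summable_sq_norm_of_weighted hk₀ hμ hu)
  have hY := (summable_nat_add_iff 1).mpr (summable_sq_norm_of_weighted hk₀ hμ hy)
  refine Summable.of_norm (((summable_mul_mul_of_summable_sq hX hU hY).mul_left |b|).congr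
    fun n => ?_)
  rw [goyTriadB, norm_ofReal_mul_conj_mul_conj_mul_conj, abs_mul,
    abs_of_pos (by positivity : 0 < k₀ * μ ^ n)]
  ring

lemma tsum_goyB_mul_conj (a b : ℝ) (hu0 : u 0 = 0) (hy0 : y 0 = 0) :
    ∑' n, goyB k₀ μ a b u x (n + 1) * conj (y (n + 1)) =
      -I * (∑' n, goyTriadA k₀ μ a u y x n - ∑' n, goyTriadA k₀ μ a u x y n
        + (∑' n, goyTriadB k₀ μ b u y x n - ∑' n, goyTriadB k₀ μ b u x y n)) := by
  have hAxy := summable_goyTriadA hk₀ hμ hu hx hy a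
  have hBxy := summable_goyTriadB hk₀ hμ hu hx hy b
  have hAyx := (summable_nat_add_iff 2).mpr (summable_goyTriadA hk₀ hμ hu hy hx a)
  have hByx := (summable_nat_add_iff 1).mpr (summable_goyTriadB hk₀ hμ hu hy hx b)
  have shiftA : ∑' n, goyTriadA k₀ μ a u y x (n + 2) = ∑' n, goyTriadA k₀ μ a u y x n :=
    tsum_nat_add_of_eq_zero 2 fun i hi => by
      interval_cases i <;> simp [goyTriadA, hu0, hy0]
  have shiftB : ∑' n, goyTriadB k₀ μ b u y x (n + 1) = ∑' n, goyTriadB k₀ μ b u y x n :=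
    tsum_nat_add_of_eq_zero 1 fun i hi => by
      interval_cases i; simp [goyTriadB, hu0]
  simp_rw [goyB_succ_mul_conj]
  rw [tsum_mul_left, (hAyx.sub hAxy).tsum_add (hByx.sub hBxy), hAyx.tsum_sub hAxy,
    hByx.tsum_sub hBxy, shiftA, shiftB]

lemma goyForm_antisymm (a b : ℝ) (hu0 : u 0 = 0) (hx0 : x 0 = 0) (hy0 : y 0 = 0) :
    goyForm k₀ μ a b u x y = -goyForm k₀ μ a b u y x := by
  have hxy := tsum_goyB_mul_conj hk₀ hμ hu hx hy a b hu0 hy0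
  have hyx := tsum_goyB_mul_conj hk₀ hμ hu hy hx a b hu0 hx0
  rw [goyForm, goyForm, hxy, hyx, ← neg_re]
  congr 1
  ring

end WeightedSquareSummable

theorem stmt_10 (k₀ μ a b : ℝ) (hk₀ : 0 < k₀) (hμ : 1 < μ)
    (u v w : ℕ → ℂ) (hu0 : u 0 = 0) (hv0 : v 0 = 0) (hw0 : w 0 = 0)
    (hu : Summable (fun n => (k₀ * μ ^ n) ^ 2 * ‖u n‖ ^ 2))
    (hv : Summable (fun n => (k₀ * μ ^ n) ^ 2 * ‖v n‖ ^ 2))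
    (hw : Summable (fun n => (k₀ * μ ^ n) ^ 2 * ‖w n‖ ^ 2)) :
    goyForm k₀ μ a b u v w = - goyForm k₀ μ a b u w v
    ∧ goyForm k₀ μ a b u v v = 0 := by
  have hvw := goyForm_antisymm hk₀ hμ.le hu hv hw a b hu0 hv0 hw0
  have hvv := goyForm_antisymm hk₀ hμ.le hu hv hv a b hu0 hv0 hv0
  exact ⟨hvw, by linarith⟩
end
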